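/- arXiv:1904.06450 — 3 statements merged into one kernel-verified Lean document; each statement's English description precedes it below -/
import Mathlib

section
/- Fix p ∈ [0,1]^J and J orthogonal projections π_j^0 : ℝ^n → (V_j^0)^⊥, where V_j^0 is an n_j'-dimensional subspace of ℝ^n. Then there exists ν > 0 such that sup_{V ≤ ℝ^n} [dim V − Σ_{j=1}^J p_j dim π_j(V)] ≤ sup_{W ≤ ℝ^n} [dim W − Σ_{j=1}^J p_j dim π_j^0(W)] holds for all J-tuples of orthogonal projections π_j : ℝ^n → V_j^⊥, where each V_j is an n_j'-dimensional subspace of ℝ^n within distance ν of V_j^0; both suprema are over all linear subspaces of ℝ^n. -/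
open MeasureTheory Module
noncomputable section

abbrev Euc (n : ℕ) := EuclideanSpace ℝ (Fin n)

def latticeCube {m : ℕ} (v : Fin m → ℤ) (A : ℝ) : Set (Euc m) :=
  {x | ∀ i, (v i : ℝ) ≤ x i ∧ x i < v i + A}

def LatticeConst {m : ℕ} (f : Euc m → ℝ) : Prop :=
  ∀ v : Fin m → ℤ, ∀ x ∈ latticeCube v 1, ∀ y ∈ latticeCube v 1, f x = f y

def cubeR (n : ℕ) (R : ℝ) : Set (Euc n) := {x | ∀ i, |x i| ≤ R}

def BLconst {n J : ℕ} {nd : Fin J → ℕ} (π : ∀ j, Euc n →ₗ[ℝ] Euc (nd j))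
    (p : Fin J → ℝ) (R : ℝ) : ℝ :=
  sSup {r : ℝ | ∃ f : ∀ j, Euc (nd j) → ℝ,
    (∀ j, LatticeConst (f j)) ∧ (∀ j, Integrable (f j)) ∧
    (∀ j x, 0 ≤ f j x) ∧ (∀ j, f j ≠ 0) ∧
    r = (∫ x in cubeR n R, ∏ j, f j (π j x) ^ p j) / ∏ j, (∫ x, f j x) ^ p j}

def supExp {n J : ℕ} {nd : Fin J → ℕ} (π : ∀ j, Euc n →ₗ[ℝ] Euc (nd j))
    (p : Fin J → ℝ) (R : ℝ) : ℝ :=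
  ⨆ V : Submodule ℝ (Euc n),
    R ^ ((finrank ℝ V : ℝ) - ∑ j, p j * (finrank ℝ (V.map (π j)) : ℝ))

def oprojL {n : ℕ} (U : Submodule ℝ (Euc n)) : Euc n →L[ℝ] Euc n :=
  U.subtypeL.comp (U.orthogonalProjection)

def oproj {n : ℕ} (U : Submodule ℝ (Euc n)) : Euc n →ₗ[ℝ] Euc n :=
  (oprojL U).toLinearMap

def projDist {n : ℕ} (U W : Submodule ℝ (Euc n)) : ℝ := ‖oprojL U - oprojL W‖

def deltaNbhd {n : ℕ} (δ : ℝ) (a : Euc n) (W : Submodule ℝ (Euc n)) : Set (Euc n) :=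
  {x | Metric.infDist x ((a + ·) '' (W : Set (Euc n))) ≤ δ}

namespace SupStab

open RealInnerProductSpace
set_option maxHeartbeats 1000000

variable {n : ℕ}

lemma oprojL_apply (U : Submodule ℝ (Euc n)) (x : Euc n) :
    oprojL U x = (U.orthogonalProjection x : Euc n) := rfl

lemma oprojL_norm_le (U : Submodule ℝ (Euc n)) : ‖oprojL U‖ ≤ 1 := by
  refine ContinuousLinearMap.opNorm_le_bound _ zero_le_one (fun x => ?_)
  rw [oprojL_apply, one_mul]
  have h1 : ‖U.orthogonalProjection x‖ ≤ ‖U.orthogonalProjection‖ * ‖x‖ :=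
    (U.orthogonalProjection).le_opNorm x
  have h2 : ‖U.orthogonalProjection‖ ≤ 1 := Submodule.orthogonalProjectionOnto_norm_le U
  have h3 : ‖(U.orthogonalProjection x : Euc n)‖ = ‖U.orthogonalProjection x‖ := rfl
  nlinarith [norm_nonneg x]

lemma oprojL_mem_self (U : Submodule ℝ (Euc n)) {x : Euc n} (hx : x ∈ U) :
    oprojL U x = x := by
  exact (Submodule.starProjection_eq_self_iff (K := U)).mpr hx

lemma oprojL_idem (U : Submodule ℝ (Euc n)) : (oprojL U).comp (oprojL U) = oprojL U := by
  refine ContinuousLinearMap.ext fun x => ?_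
  rw [ContinuousLinearMap.comp_apply]
  exact oprojL_mem_self U (U.orthogonalProjection x).2

lemma oprojL_selfAdjoint (U : Submodule ℝ (Euc n)) : IsSelfAdjoint (oprojL U) :=
  isSelfAdjoint_starProjection U

lemma range_oproj (U : Submodule ℝ (Euc n)) : LinearMap.range (oproj U) = U := by
  apply le_antisymm
  · rintro x ⟨y, rfl⟩
    exact (U.orthogonalProjection y).2
  · intro x hx
    exact ⟨x, oprojL_mem_self U hx⟩

lemma trace_oproj (W : Submodule ℝ (Euc n)) :
    LinearMap.trace ℝ (Euc n) (oproj W) = (finrank ℝ W : ℝ) := by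
  have h : LinearMap.IsProj W (oproj W) := by
    constructor
    · intro x; exact (W.orthogonalProjection x).2
    · intro x hx; exact oprojL_mem_self W hx
  exact h.trace

/-- A self-adjoint idempotent is an orthogonal projection. -/
lemma eq_oprojL {Q : Euc n →L[ℝ] Euc n} (hs : IsSelfAdjoint Q)
    (hi : Q.comp Q = Q) : Q = oprojL (LinearMap.range (Q : Euc n →ₗ[ℝ] Euc n)) := by
  set R := LinearMap.range (Q : Euc n →ₗ[ℝ] Euc n)
  refine ContinuousLinearMap.ext fun v => ?_
  have hvm : Q v ∈ R := LinearMap.mem_range_self _ v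
  have hvo : ∀ w ∈ R, ⟪v - Q v, w⟫ = 0 := by
    rintro w ⟨u, rfl⟩
    have hsym := (ContinuousLinearMap.isSelfAdjoint_iff_isSymmetric.mp hs) (v - Q v) u
    have hz : Q (v - Q v) = 0 := by
      have h2 := congrArg (fun T : Euc n →L[ℝ] Euc n => T v) hi
      simp only [ContinuousLinearMap.comp_apply] at h2
      simp [map_sub, h2]
    simp only [ContinuousLinearMap.coe_coe] at hsym ⊢
    rw [← hsym, hz, inner_zero_left]
  have h3 := Submodule.eq_starProjection_of_mem_of_inner_eq_zero (u := v) hvm hvo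
  exact h3.symm

lemma oprojL_orthogonal (U : Submodule ℝ (Euc n)) :
    oprojL Uᗮ = ContinuousLinearMap.id ℝ (Euc n) - oprojL U := by
  refine ContinuousLinearMap.ext fun x => ?_
  exact Submodule.starProjection_orthogonal_val (K := U) x

lemma projDist_orthogonal (U W : Submodule ℝ (Euc n)) :
    ‖oprojL Uᗮ - oprojL Wᗮ‖ = projDist U W := by
  rw [oprojL_orthogonal, oprojL_orthogonal, projDist]
  rw [show (ContinuousLinearMap.id ℝ (Euc n) - oprojL U) -
      (ContinuousLinearMap.id ℝ (Euc n) - oprojL W) = -(oprojL U - oprojL W) by abel]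
  rw [norm_neg]

/-- Lower semicontinuity of rank. -/
lemma rank_lsc (S : Euc n →L[ℝ] Euc n) :
    ∃ ε > 0, ∀ T : Euc n →L[ℝ] Euc n, ‖T - S‖ < ε →
      finrank ℝ (LinearMap.range (S : Euc n →ₗ[ℝ] Euc n)) ≤
      finrank ℝ (LinearMap.range (T : Euc n →ₗ[ℝ] Euc n)) := by
  set r := finrank ℝ (LinearMap.range (S : Euc n →ₗ[ℝ] Euc n)) with hr
  let b : Basis (Fin r) ℝ (LinearMap.range (S : Euc n →ₗ[ℝ] Euc n)) := finBasis ℝ _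
  have hmem : ∀ i : Fin r, ∃ x, S x = (b i : Euc n) := fun i => (b i).2
  choose u hu using hmem
  have hind : LinearIndependent ℝ (fun i => S (u i)) := by
    have heq : (fun i => S (u i)) = fun i => ((b i : Euc n)) := funext fun i => hu i
    rw [heq]
    exact b.linearIndependent.map' (LinearMap.range (S : Euc n →ₗ[ℝ] Euc n)).subtype (Submodule.ker_subtype _)
  have hcont : Continuous (fun T : Euc n →L[ℝ] Euc n => fun i : Fin r => T (u i)) :=
    continuous_pi fun i => (ContinuousLinearMap.apply ℝ (Euc n) (u i)).continuous
  have hopen : IsOpen ((fun T : Euc n →L[ℝ] Euc n => fun i : Fin r => T (u i)) ⁻¹'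
      {f : Fin r → Euc n | LinearIndependent ℝ f}) :=
    isOpen_setOf_linearIndependent.preimage hcont
  have hSmem : S ∈ (fun T : Euc n →L[ℝ] Euc n => fun i : Fin r => T (u i)) ⁻¹'
      {f : Fin r → Euc n | LinearIndependent ℝ f} := hind
  obtain ⟨ε, hε, hball⟩ := Metric.isOpen_iff.mp hopen S hSmem
  refine ⟨ε, hε, fun T hT => ?_⟩
  have hTmem : T ∈ Metric.ball S ε := by rwa [Metric.mem_ball, dist_eq_norm]
  have hTi : LinearIndependent ℝ (fun i : Fin r => T (u i)) := hball hTmem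
  have h2 : LinearIndependent ℝ (fun i : Fin r =>
      (⟨T (u i), LinearMap.mem_range_self _ _⟩ : LinearMap.range (T : Euc n →ₗ[ℝ] Euc n))) :=
    hTi.of_comp (LinearMap.range (T : Euc n →ₗ[ℝ] Euc n)).subtype
  simpa using h2.fintype_card_le_finrank

/-- Continuity of the trace on continuous linear endomorphisms. -/
lemma trace_cont : Continuous (fun T : Euc n →L[ℝ] Euc n =>
    LinearMap.trace ℝ (Euc n) (T : Euc n →ₗ[ℝ] Euc n)) := by
  have : (fun T : Euc n →L[ℝ] Euc n => LinearMap.trace ℝ (Euc n) (T : Euc n →ₗ[ℝ] Euc n)) =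
      ((LinearMap.trace ℝ (Euc n)).comp (ContinuousLinearMap.coeLM ℝ) :
        (Euc n →L[ℝ] Euc n) →ₗ[ℝ] ℝ) := rfl
  rw [this]
  exact LinearMap.continuous_of_finiteDimensional _

/-- The set of orthogonal projections is compact. -/
lemma grassmannian_compact :
    IsCompact (Set.range (oprojL : Submodule ℝ (Euc n) → Euc n →L[ℝ] Euc n)) := by
  have hset : Set.range (oprojL : Submodule ℝ (Euc n) → Euc n →L[ℝ] Euc n) =
      {Q : Euc n →L[ℝ] Euc n | IsSelfAdjoint Q ∧ Q.comp Q = Q} := by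
    ext Q
    constructor
    · rintro ⟨W, rfl⟩
      exact ⟨oprojL_selfAdjoint W, oprojL_idem W⟩
    · rintro ⟨hs, hi⟩
      exact ⟨_, (eq_oprojL hs hi).symm⟩
  have hclosed : IsClosed {Q : Euc n →L[ℝ] Euc n | IsSelfAdjoint Q ∧ Q.comp Q = Q} := by
    apply IsClosed.inter
    · have hstar : Continuous (fun Q : Euc n →L[ℝ] Euc n => star Q) := by
        have heq : (fun Q : Euc n →L[ℝ] Euc n => star Q) =
            fun Q => ContinuousLinearMap.adjoint Q := by
          funext Q; exact ContinuousLinearMap.star_eq_adjoint Q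
        rw [heq]
        exact (ContinuousLinearMap.adjoint : (Euc n →L[ℝ] Euc n) ≃ₗᵢ⋆[ℝ]
          (Euc n →L[ℝ] Euc n)).continuous
      exact isClosed_eq hstar continuous_id
    · exact isClosed_eq (continuous_id.mul continuous_id) continuous_id
  have hsub : Set.range (oprojL : Submodule ℝ (Euc n) → Euc n →L[ℝ] Euc n) ⊆
      Metric.closedBall 0 1 := by
    rintro Q ⟨W, rfl⟩
    exact mem_closedBall_zero_iff.mpr (oprojL_norm_le W)
  rw [hset] at hsub ⊢
  exact (isCompact_closedBall _ _).of_isClosed_subset hclosed hsub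

/-- The comparison function on projections. -/
def gfun {J : ℕ} (p : Fin J → ℝ) (Q : Euc n →L[ℝ] Euc n)
    (V : Fin J → Submodule ℝ (Euc n)) : ℝ :=
  LinearMap.trace ℝ (Euc n) (Q : Euc n →ₗ[ℝ] Euc n) -
    ∑ j, p j * (finrank ℝ
      (LinearMap.range (((oprojL (V j)ᗮ).comp Q : Euc n →L[ℝ] Euc n) :
          Euc n →ₗ[ℝ] Euc n)) : ℝ)

lemma g_eq {J : ℕ} (p : Fin J → ℝ) (W : Submodule ℝ (Euc n))
    (V : Fin J → Submodule ℝ (Euc n)) :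
    gfun p (oprojL W) V =
      (finrank ℝ W : ℝ) - ∑ j, p j * (finrank ℝ (W.map (oproj (V j)ᗮ)) : ℝ) := by
  unfold gfun
  congr 1
  · exact trace_oproj W
  · refine Finset.sum_congr rfl fun j _ => ?_
    congr 2
    have h1 : ((((oprojL (V j)ᗮ).comp (oprojL W) : Euc n →L[ℝ] Euc n)) :
        Euc n →ₗ[ℝ] Euc n) = (oproj (V j)ᗮ).comp (oproj W) := rfl
    rw [h1, LinearMap.range_comp, range_oproj]

lemma per_Q {J : ℕ} (p : Fin J → ℝ) (hp : ∀ j, 0 ≤ p j)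
    (V0 : Fin J → Submodule ℝ (Euc n)) (Q : Euc n →L[ℝ] Euc n) :
    ∃ ε > 0, Q ∈ Set.range (oprojL : Submodule ℝ (Euc n) → Euc n →L[ℝ] Euc n) →
      ∀ W' : Submodule ℝ (Euc n), ∀ V : Fin J → Submodule ℝ (Euc n),
      ‖oprojL W' - Q‖ < ε → (∀ j, ‖oprojL (V j)ᗮ - oprojL (V0 j)ᗮ‖ < ε) →
      gfun p (oprojL W') V ≤ gfun p Q V0 := by
  by_cases hQ : Q ∈ Set.range (oprojL : Submodule ℝ (Euc n) → Euc n →L[ℝ] Euc n)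
  swap
  · exact ⟨1, one_pos, fun h => absurd h hQ⟩
  obtain ⟨W, rfl⟩ := hQ
  -- trace continuity
  obtain ⟨δ, hδ, hδp⟩ := Metric.continuous_iff.mp trace_cont (oprojL W) 1 one_pos
  -- rank lower semicontinuity for each j
  choose εB hεBpos hεB using fun j : Fin J =>
    rank_lsc ((oprojL (V0 j)ᗮ).comp (oprojL W))
  set c : Fin (J + 1) → ℝ := Fin.cons δ (fun j => εB j / 2) with hc
  have hcpos : ∀ i, 0 < c i := by
    intro i
    refine Fin.cases ?_ ?_ i
    · simpa [hc] using hδ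
    · intro j; simpa [hc] using half_pos (hεBpos j)
  have hne : (Finset.univ : Finset (Fin (J + 1))).Nonempty := Finset.univ_nonempty
  set ε : ℝ := Finset.univ.inf' hne c with hε
  have hεpos : 0 < ε := (Finset.lt_inf'_iff hne).mpr fun i _ => hcpos i
  have hεδ : ε ≤ δ :=
    calc ε ≤ c 0 := Finset.inf'_le c (Finset.mem_univ _)
      _ = δ := by rw [hc, Fin.cons_zero]
  have hεB2 : ∀ j : Fin J, ε ≤ εB j / 2 := fun j =>
    calc ε ≤ c j.succ := Finset.inf'_le c (Finset.mem_univ _)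
      _ = εB j / 2 := by rw [hc, Fin.cons_succ]
  refine ⟨ε, hεpos, fun _ W' V h1 h2 => ?_⟩
  -- trace comparison
  have htr : finrank ℝ W' = finrank ℝ W := by
    have hd : dist (oprojL W') (oprojL W) < δ := by
      rw [dist_eq_norm]; exact lt_of_lt_of_le h1 hεδ
    have := hδp _ hd
    rw [Real.dist_eq] at this
    have h3 : |(finrank ℝ W' : ℝ) - (finrank ℝ W : ℝ)| < 1 := by
      rwa [show LinearMap.trace ℝ (Euc n) ((oprojL W' : Euc n →L[ℝ] Euc n) :
            Euc n →ₗ[ℝ] Euc n) = (finrank ℝ W' : ℝ) from trace_oproj W',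
          show LinearMap.trace ℝ (Euc n) ((oprojL W : Euc n →L[ℝ] Euc n) :
            Euc n →ₗ[ℝ] Euc n) = (finrank ℝ W : ℝ) from trace_oproj W] at this
    obtain ⟨ha, hb⟩ := abs_lt.mp h3
    have hlt1 : (finrank ℝ W' : ℝ) < (finrank ℝ W : ℝ) + 1 := by linarith
    have hlt2 : (finrank ℝ W : ℝ) < (finrank ℝ W' : ℝ) + 1 := by linarith
    have hn1 : finrank ℝ W' < finrank ℝ W + 1 := by exact_mod_cast hlt1
    have hn2 : finrank ℝ W < finrank ℝ W' + 1 := by exact_mod_cast hlt2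
    omega
  -- rank comparison
  have hrk : ∀ j : Fin J,
      finrank ℝ (LinearMap.range ((((oprojL (V0 j)ᗮ).comp (oprojL W) :
          Euc n →L[ℝ] Euc n)) : Euc n →ₗ[ℝ] Euc n)) ≤
      finrank ℝ (LinearMap.range ((((oprojL (V j)ᗮ).comp (oprojL W') :
          Euc n →L[ℝ] Euc n)) : Euc n →ₗ[ℝ] Euc n)) := by
    intro j
    apply hεB j
    have hdecomp : (oprojL (V j)ᗮ).comp (oprojL W') - (oprojL (V0 j)ᗮ).comp (oprojL W) =
        (oprojL (V j)ᗮ).comp (oprojL W' - oprojL W) +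
          (oprojL (V j)ᗮ - oprojL (V0 j)ᗮ).comp (oprojL W) := by
      refine ContinuousLinearMap.ext fun x => ?_
      simp only [ContinuousLinearMap.sub_apply, ContinuousLinearMap.add_apply,
        ContinuousLinearMap.comp_apply, map_sub]
      abel
    rw [hdecomp]
    calc ‖(oprojL (V j)ᗮ).comp (oprojL W' - oprojL W) +
          (oprojL (V j)ᗮ - oprojL (V0 j)ᗮ).comp (oprojL W)‖
        ≤ ‖(oprojL (V j)ᗮ).comp (oprojL W' - oprojL W)‖ +
          ‖(oprojL (V j)ᗮ - oprojL (V0 j)ᗮ).comp (oprojL W)‖ := norm_add_le _ _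
      _ ≤ ‖oprojL (V j)ᗮ‖ * ‖oprojL W' - oprojL W‖ +
          ‖oprojL (V j)ᗮ - oprojL (V0 j)ᗮ‖ * ‖oprojL W‖ :=
            add_le_add (ContinuousLinearMap.opNorm_comp_le _ _)
              (ContinuousLinearMap.opNorm_comp_le _ _)
      _ < εB j := by
          have hn1 : ‖oprojL (V j)ᗮ‖ ≤ 1 := oprojL_norm_le _
          have hn2 : ‖oprojL W‖ ≤ 1 := oprojL_norm_le _
          have hx1 : ‖oprojL W' - oprojL W‖ < εB j / 2 := lt_of_lt_of_le h1 (hεB2 j)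
          have hx2 : ‖oprojL (V j)ᗮ - oprojL (V0 j)ᗮ‖ < εB j / 2 :=
            lt_of_lt_of_le (h2 j) (hεB2 j)
          nlinarith [norm_nonneg (oprojL W' - oprojL W),
            norm_nonneg (oprojL (V j)ᗮ - oprojL (V0 j)ᗮ),
            norm_nonneg (oprojL (V j)ᗮ), norm_nonneg (oprojL W)]
  -- combine
  unfold gfun
  have e1 : LinearMap.trace ℝ (Euc n) ((oprojL W' : Euc n →L[ℝ] Euc n) :
      Euc n →ₗ[ℝ] Euc n) = (finrank ℝ W' : ℝ) := trace_oproj W'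
  have e2 : LinearMap.trace ℝ (Euc n) ((oprojL W : Euc n →L[ℝ] Euc n) :
      Euc n →ₗ[ℝ] Euc n) = (finrank ℝ W : ℝ) := trace_oproj W
  rw [e1, e2, htr]
  refine sub_le_sub le_rfl (Finset.sum_le_sum fun j _ => ?_)
  exact mul_le_mul_of_nonneg_left (Nat.cast_le.mpr (hrk j)) (hp j)

end SupStab

lemma fbound {J : ℕ} (p : Fin J → ℝ) (hp : ∀ j, 0 ≤ p j)
    (V : Fin J → Submodule ℝ (Euc n)) (W : Submodule ℝ (Euc n)) :
    (finrank ℝ W : ℝ) - ∑ j, p j * (finrank ℝ (W.map (oproj (V j)ᗮ)) : ℝ) ≤ n := by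
  have h1 : (finrank ℝ W : ℝ) ≤ n := by
    have := Submodule.finrank_le W
    have h2 : finrank ℝ (Euc n) = n := finrank_euclideanSpace_fin
    exact_mod_cast h2 ▸ this
  have h3 : 0 ≤ ∑ j, p j * (finrank ℝ (W.map (oproj (V j)ᗮ)) : ℝ) :=
    Finset.sum_nonneg fun j _ => mul_nonneg (hp j) (Nat.cast_nonneg _)
  linarith

lemma fbdd {J : ℕ} (p : Fin J → ℝ) (hp : ∀ j, 0 ≤ p j)
    (V : Fin J → Submodule ℝ (Euc n)) :
    BddAbove (Set.range fun W : Submodule ℝ (Euc n) =>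
      (finrank ℝ W : ℝ) - ∑ j, p j * (finrank ℝ (W.map (oproj (V j)ᗮ)) : ℝ)) := by
  refine ⟨n, ?_⟩
  rintro _ ⟨W, rfl⟩
  exact fbound p hp V W


open SupStab in
theorem sup_exponent_stability
    (n J : ℕ) (n' : Fin J → ℕ) (p : Fin J → ℝ) (hp : ∀ j, p j ∈ Set.Icc (0:ℝ) 1)
    (V0 : Fin J → Submodule ℝ (Euc n)) (hV0 : ∀ j, finrank ℝ ↥(V0 j) = n' j) :
    ∃ ν : ℝ, 0 < ν ∧
      ∀ V : Fin J → Submodule ℝ (Euc n),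
        (∀ j, finrank ℝ ↥(V j) = n' j) → (∀ j, projDist (V j) (V0 j) ≤ ν) →
        (⨆ W : Submodule ℝ (Euc n),
            ((finrank ℝ ↥W : ℝ) - ∑ j, p j * (finrank ℝ ↥(W.map (oproj (V j)ᗮ)) : ℝ))) ≤
          ⨆ W : Submodule ℝ (Euc n),
            ((finrank ℝ ↥W : ℝ) - ∑ j, p j * (finrank ℝ ↥(W.map (oproj (V0 j)ᗮ)) : ℝ)) := by
  classical
  have hp0 : ∀ j, 0 ≤ p j := fun j => (hp j).1
  set F0 : ℝ := ⨆ W : Submodule ℝ (Euc n),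
      ((finrank ℝ ↥W : ℝ) - ∑ j, p j * (finrank ℝ ↥(W.map (oproj (V0 j)ᗮ)) : ℝ)) with hF0
  have hF0le : ∀ W : Submodule ℝ (Euc n),
      (finrank ℝ ↥W : ℝ) - ∑ j, p j * (finrank ℝ ↥(W.map (oproj (V0 j)ᗮ)) : ℝ) ≤ F0 :=
    fun W => le_ciSup (fbdd p hp0 V0) W
  choose ε hεpos hεQ using fun Q : Euc n →L[ℝ] Euc n => per_Q p hp0 V0 Q
  set K : Set (Euc n →L[ℝ] Euc n) :=
    Set.range (oprojL : Submodule ℝ (Euc n) → Euc n →L[ℝ] Euc n) with hK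
  have hcov : K ⊆ ⋃ Q ∈ K, Metric.ball Q (ε Q) := fun Q hQ =>
    Set.mem_biUnion hQ (Metric.mem_ball_self (hεpos Q))
  obtain ⟨b', hb'sub, hb'fin, hb'cov⟩ :=
    grassmannian_compact.elim_finite_subcover_image (fun Q _ => Metric.isOpen_ball) hcov
  set t : Finset (Euc n →L[ℝ] Euc n) := hb'fin.toFinset with ht
  have htne : t.Nonempty := by
    have hbot : (oprojL (⊥ : Submodule ℝ (Euc n))) ∈ K := ⟨⊥, rfl⟩
    obtain ⟨Q, hQ⟩ := Set.mem_iUnion₂.mp (hb'cov hbot)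
    exact ⟨Q, by simpa [ht] using hQ.1⟩
  set m : ℝ := t.inf' htne ε with hm
  have hmpos : 0 < m := (Finset.lt_inf'_iff htne).mpr fun Q _ => hεpos Q
  refine ⟨m / 2, half_pos hmpos, fun V hdim hclose => ?_⟩
  refine ciSup_le fun W' => ?_
  -- locate oprojL W' in the cover
  have hW'K : oprojL W' ∈ K := ⟨W', rfl⟩
  obtain ⟨Q, hQmem⟩ := Set.mem_iUnion₂.mp (hb'cov hW'K)
  obtain ⟨hQb', hQball⟩ := hQmem
  have hQt : Q ∈ t := by simpa [ht] using hQb'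
  have hQK : Q ∈ K := hb'sub hQb'
  have hεQm : m ≤ ε Q := Finset.inf'_le ε hQt
  obtain ⟨W, rfl⟩ := hQK
  have h1 : ‖oprojL W' - oprojL W‖ < ε (oprojL W) := by
    rw [← dist_eq_norm]; exact hQball
  have h2 : ∀ j, ‖oprojL (V j)ᗮ - oprojL (V0 j)ᗮ‖ < ε (oprojL W) := by
    intro j
    rw [projDist_orthogonal]
    calc projDist (V j) (V0 j) ≤ m / 2 := hclose j
      _ < m := half_lt_self hmpos
      _ ≤ ε (oprojL W) := hεQm
  have hmain := hεQ (oprojL W) ⟨W, rfl⟩ W' V h1 h2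
  rw [g_eq, g_eq] at hmain
  exact hmain.trans (hF0le W)
end
end

section
/- Let p ∈ [0,1]^J and let π_j : ℝ^n → ℝ^{n_j} (j = 1,…,J) be surjective linear maps. Then there exists c > 0, depending only on (π_1,…,π_J), p, and n, such that for every linear subspace V ≤ ℝ^n and every R ≥ 1 there exist nonzero, nonnegative, integrable functions f_j : ℝ^{n_j} → [0,∞), each constant on the unit cube lattice of ℝ^{n_j}, satisfying ∫_{[-R,R]^n} Π_{j=1}^J f_j(π_j(x))^{p_j} dx ≥ c · R^{dim V − Σ_{j=1}^J p_j dim π_j(V)} · Π_{j=1}^J (∫_{ℝ^{n_j}} f_j)^{p_j}. -/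
open MeasureTheory Module
noncomputable section

namespace RBL

variable {m : ℕ}

lemma oproj_apply (U : Submodule ℝ (Euc m)) (x : Euc m) :
    oproj U x = (U.orthogonalProjection x : Euc m) := rfl

lemma oproj_mem (U : Submodule ℝ (Euc m)) (x : Euc m) : oproj U x ∈ U := by
  rw [oproj_apply]; exact (U.orthogonalProjection x).2

lemma oproj_of_mem (U : Submodule ℝ (Euc m)) {x : Euc m} (h : x ∈ U) : oproj U x = x := by
  rw [oproj_apply]; exact Submodule.starProjection_eq_self_iff.2 h

lemma oproj_of_mem_orth (U : Submodule ℝ (Euc m)) {x : Euc m} (h : x ∈ Uᗮ) : oproj U x = 0 := by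
  rw [oproj_apply, show (U.orthogonalProjection) x = 0 from
    Submodule.orthogonalProjectionOnto_apply_of_mem_orthogonal h]; rfl

lemma norm_oproj_le (U : Submodule ℝ (Euc m)) (x : Euc m) : ‖oproj U x‖ ≤ ‖x‖ := by
  rw [oproj_apply]
  calc ‖(U.orthogonalProjection x : Euc m)‖ = ‖U.orthogonalProjection x‖ := rfl
    _ ≤ ‖U.orthogonalProjection‖ * ‖x‖ := (U.orthogonalProjection).le_opNorm x
    _ ≤ 1 * ‖x‖ := by gcongr; exact Submodule.orthogonalProjectionOnto_norm_le U
    _ = ‖x‖ := one_mul _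

lemma sub_oproj_eq (U : Submodule ℝ (Euc m)) (x : Euc m) :
    x - oproj U x = oproj Uᗮ x := by
  rw [oproj_apply U, oproj_apply Uᗮ]; exact (Submodule.starProjection_orthogonal_val (K := U) x).symm

lemma norm_sub_oproj_le (U : Submodule ℝ (Euc m)) (x : Euc m) : ‖x - oproj U x‖ ≤ ‖x‖ := by
  rw [sub_oproj_eq]; exact norm_oproj_le _ x

lemma oproj_sub_oproj (U : Submodule ℝ (Euc m)) (x : Euc m) :
    oproj U (x - oproj U x) = 0 := by
  have h : x - oproj U x ∈ Uᗮ := by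
    rw [sub_oproj_eq]; exact oproj_mem _ x
  exact oproj_of_mem_orth U h

lemma oproj_idem (U : Submodule ℝ (Euc m)) (x : Euc m) :
    oproj U (oproj U x) = oproj U x :=
  oproj_of_mem U (oproj_mem U x)

lemma det_comb (U : Submodule ℝ (Euc m)) (a b : ℝ) :
    LinearMap.det (a • oproj U + b • (LinearMap.id - oproj U)) =
      a ^ finrank ℝ U * b ^ (m - finrank ℝ U) := by
  classical
  set g : Euc m →ₗ[ℝ] Euc m := a • oproj U + b • (LinearMap.id - oproj U) with hg
  have hcompl : IsCompl U Uᗮ := Submodule.isCompl_orthogonal_of_hasOrthogonalProjection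
  set e : (U × Uᗮ) ≃ₗ[ℝ] Euc m := Submodule.prodEquivOfIsCompl U Uᗮ hcompl with he
  have b1 : Basis (Fin (finrank ℝ U)) ℝ U := finBasis ℝ U
  have b2 : Basis (Fin (finrank ℝ Uᗮ)) ℝ Uᗮ := finBasis ℝ Uᗮ
  set B : Basis (Fin (finrank ℝ U) ⊕ Fin (finrank ℝ Uᗮ)) ℝ (Euc m) := (b1.prod b2).map e with hB
  have hgB : ∀ i, g (B i) = (Sum.elim (fun _ => a) (fun _ => b) i) • B i := by
    intro i
    have hBapply : B i = e ((b1.prod b2) i) := by rw [hB]; rfl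
    cases i with
    | inl i =>
        have h1 : (B (Sum.inl i) : Euc m) ∈ U := by
          rw [hBapply]
          simp [he, Basis.prod_apply]
        have hpr : oproj U (B (Sum.inl i)) = B (Sum.inl i) := oproj_of_mem U h1
        simp [hg, LinearMap.add_apply, LinearMap.smul_apply, hpr, LinearMap.sub_apply]
    | inr i =>
        have h1 : (B (Sum.inr i) : Euc m) ∈ Uᗮ := by
          rw [hBapply]
          simp [he, Basis.prod_apply]
        have hpr : oproj U (B (Sum.inr i)) = 0 := oproj_of_mem_orth U h1
        simp [hg, LinearMap.add_apply, LinearMap.smul_apply, hpr, LinearMap.sub_apply]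
  have hmat : LinearMap.toMatrix B B g =
      Matrix.diagonal (Sum.elim (fun _ => a) (fun _ => b)) := by
    ext i j
    rw [LinearMap.toMatrix_apply, hgB j, _root_.map_smul, B.repr_self]
    by_cases h : i = j
    · subst h; simp
    · simp [Matrix.diagonal_apply_ne _ h, Finsupp.single_apply, Ne.symm h, h]
  have hdet := LinearMap.det_toMatrix B g
  rw [hmat, Matrix.det_diagonal, Fintype.prod_sum_type] at hdet
  have hrank : finrank ℝ Uᗮ = m - finrank ℝ U := by
    have := Submodule.finrank_add_finrank_orthogonal U
    rw [finrank_euclideanSpace_fin] at this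
    omega
  rw [← hdet]
  simp [hrank]

def comb (U : Submodule ℝ (Euc m)) (a b : ℝ) : Euc m →ₗ[ℝ] Euc m :=
  a • oproj U + b • (LinearMap.id - oproj U)

lemma comb_apply (U : Submodule ℝ (Euc m)) (a b : ℝ) (y : Euc m) :
    comb U a b y = a • oproj U y + b • (y - oproj U y) := by
  simp [comb, LinearMap.add_apply, LinearMap.smul_apply, LinearMap.sub_apply]

lemma det_comb' (U : Submodule ℝ (Euc m)) (a b : ℝ) :
    LinearMap.det (comb U a b) = a ^ finrank ℝ U * b ^ (m - finrank ℝ U) :=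
  det_comb U a b

lemma oproj_comb (U : Submodule ℝ (Euc m)) (a b : ℝ) (y : Euc m) :
    oproj U (comb U a b y) = a • oproj U y := by
  rw [comb_apply, map_add, _root_.map_smul, _root_.map_smul, oproj_idem, oproj_sub_oproj,
    smul_zero, add_zero]

lemma tube_vol_le (U : Submodule ℝ (Euc m)) {a b : ℝ} (ha : 0 < a) (hb : 0 < b) :
    volume {y : Euc m | ‖y - oproj U y‖ ≤ b ∧ ‖y‖ ≤ a}
      ≤ ENNReal.ofReal (a ^ finrank ℝ U * b ^ (m - finrank ℝ U)) *
          volume (Metric.closedBall (0 : Euc m) 2) := by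
  have hsub : {y : Euc m | ‖y - oproj U y‖ ≤ b ∧ ‖y‖ ≤ a} ⊆
      comb U a b '' Metric.closedBall 0 2 := by
    rintro y ⟨h1, h2⟩
    refine ⟨a⁻¹ • oproj U y + b⁻¹ • (y - oproj U y), ?_, ?_⟩
    · rw [Metric.mem_closedBall, dist_zero_right]
      have e1 : ‖a⁻¹ • oproj U y‖ = a⁻¹ * ‖oproj U y‖ := by
        rw [norm_smul, Real.norm_eq_abs, abs_of_pos (inv_pos.2 ha)]
      have e2 : ‖b⁻¹ • (y - oproj U y)‖ = b⁻¹ * ‖y - oproj U y‖ := by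
        rw [norm_smul, Real.norm_eq_abs, abs_of_pos (inv_pos.2 hb)]
      have h3 : ‖oproj U y‖ ≤ a := le_trans (norm_oproj_le U y) h2
      have h4 : a⁻¹ * ‖oproj U y‖ ≤ 1 := by
        rw [← inv_mul_cancel₀ ha.ne']
        exact mul_le_mul_of_nonneg_left h3 (inv_nonneg.2 ha.le)
      have h5 : b⁻¹ * ‖y - oproj U y‖ ≤ 1 := by
        rw [← inv_mul_cancel₀ hb.ne']
        exact mul_le_mul_of_nonneg_left h1 (inv_nonneg.2 hb.le)
      calc ‖a⁻¹ • oproj U y + b⁻¹ • (y - oproj U y)‖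
          ≤ ‖a⁻¹ • oproj U y‖ + ‖b⁻¹ • (y - oproj U y)‖ := norm_add_le _ _
        _ = a⁻¹ * ‖oproj U y‖ + b⁻¹ * ‖y - oproj U y‖ := by rw [e1, e2]
        _ ≤ 1 + 1 := add_le_add h4 h5
        _ = 2 := by norm_num
    · have hP : oproj U (a⁻¹ • oproj U y + b⁻¹ • (y - oproj U y))
          = a⁻¹ • oproj U y := by
        rw [map_add, _root_.map_smul, _root_.map_smul, oproj_idem, oproj_sub_oproj,
          smul_zero, add_zero]
      rw [comb_apply, hP]
      have e3 : (a⁻¹ • oproj U y + b⁻¹ • (y - oproj U y)) - a⁻¹ • oproj U y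
          = b⁻¹ • (y - oproj U y) := by abel
      rw [e3, smul_smul, smul_smul, mul_inv_cancel₀ ha.ne', mul_inv_cancel₀ hb.ne',
        one_smul, one_smul]
      abel
  calc volume {y : Euc m | ‖y - oproj U y‖ ≤ b ∧ ‖y‖ ≤ a}
      ≤ volume (comb U a b '' Metric.closedBall 0 2) := measure_mono hsub
    _ = ENNReal.ofReal |LinearMap.det (comb U a b)| *
          volume (Metric.closedBall (0 : Euc m) 2) :=
        Measure.addHaar_image_linearMap volume _ _
    _ = _ := by rw [det_comb', abs_of_nonneg (by positivity)]

lemma slab_vol_ge (U : Submodule ℝ (Euc m)) {a b : ℝ} (ha : 0 < a) (hb : 0 < b) :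
    ENNReal.ofReal (a ^ finrank ℝ U * b ^ (m - finrank ℝ U)) *
        volume (Metric.closedBall (0 : Euc m) 1)
      ≤ volume {x : Euc m | ‖x - oproj U x‖ ≤ b ∧ ‖oproj U x‖ ≤ a} := by
  have hsub : comb U a b '' Metric.closedBall 0 1 ⊆
      {x : Euc m | ‖x - oproj U x‖ ≤ b ∧ ‖oproj U x‖ ≤ a} := by
    rintro _ ⟨y, hy, rfl⟩
    rw [Metric.mem_closedBall, dist_zero_right] at hy
    have hP := oproj_comb U a b y
    constructor
    · have e1 : comb U a b y - oproj U (comb U a b y) = b • (y - oproj U y) := by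
        rw [hP, comb_apply, smul_sub]; abel
      rw [e1, norm_smul, Real.norm_eq_abs, abs_of_pos hb]
      calc b * ‖y - oproj U y‖ ≤ b * ‖y‖ :=
            mul_le_mul_of_nonneg_left (norm_sub_oproj_le U y) hb.le
        _ ≤ b * 1 := mul_le_mul_of_nonneg_left hy hb.le
        _ = b := mul_one b
    · rw [hP, norm_smul, Real.norm_eq_abs, abs_of_pos ha]
      calc a * ‖oproj U y‖ ≤ a * ‖y‖ :=
            mul_le_mul_of_nonneg_left (norm_oproj_le U y) ha.le
        _ ≤ a * 1 := mul_le_mul_of_nonneg_left hy ha.le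
        _ = a := mul_one a
  calc ENNReal.ofReal (a ^ finrank ℝ U * b ^ (m - finrank ℝ U)) *
        volume (Metric.closedBall (0 : Euc m) 1)
      = volume (comb U a b '' Metric.closedBall 0 1) := by
        rw [Measure.addHaar_image_linearMap volume _ _, det_comb',
          abs_of_nonneg (by positivity)]
    _ ≤ _ := measure_mono hsub

def flr (y : Euc m) : Euc m := (WithLp.equiv 2 (Fin m → ℝ)).symm fun i => (⌊y i⌋ : ℝ)

lemma flr_apply (y : Euc m) (i : Fin m) : flr y i = (⌊y i⌋ : ℝ) := rfl

lemma continuous_coord (i : Fin m) : Continuous fun y : Euc m => y i :=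
  (continuous_apply i).comp (PiLp.continuous_ofLp 2 (fun _ : Fin m => ℝ))

lemma measurable_flr : Measurable (flr : Euc m → Euc m) := by
  apply (PiLp.continuous_toLp 2 (fun _ : Fin m => ℝ)).measurable.comp
  apply measurable_pi_lambda
  intro i
  exact (continuous_of_discreteTopology (f := fun z : ℤ => (z : ℝ))).measurable.comp
    ((continuous_coord i).measurable.floor)

lemma flr_zero : flr (0 : Euc m) = 0 := by
  unfold flr
  have h : (fun i : Fin m => ((⌊(0 : Euc m) i⌋ : ℤ) : ℝ)) = fun _ => (0 : ℝ) := by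
    funext i
    norm_num [show (0 : Euc m) i = (0:ℝ) from rfl]
  rw [h]
  rfl

lemma norm_le_of_coords {y : Euc m} {t : ℝ} (ht : 0 ≤ t) (h : ∀ i, |y i| ≤ t) :
    ‖y‖ ≤ Real.sqrt m * t := by
  rw [EuclideanSpace.norm_eq]
  have h1 : ∑ i, ‖y i‖ ^ 2 ≤ ∑ _i : Fin m, t ^ 2 := by
    apply Finset.sum_le_sum
    intro i _
    rw [Real.norm_eq_abs]
    exact pow_le_pow_left₀ (abs_nonneg _) (h i) 2
  calc Real.sqrt (∑ i, ‖y i‖ ^ 2) ≤ Real.sqrt (∑ _i : Fin m, t ^ 2) := Real.sqrt_le_sqrt h1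
    _ = Real.sqrt ((m : ℝ) * t ^ 2) := by
        rw [Finset.sum_const, Finset.card_univ]; simp [nsmul_eq_mul]
    _ = Real.sqrt m * t := by
        rw [Real.sqrt_mul (Nat.cast_nonneg m), Real.sqrt_sq ht]

lemma abs_coord_le_norm (y : Euc m) (i : Fin m) : |y i| ≤ ‖y‖ := by
  rw [EuclideanSpace.norm_eq]
  have h1 : |y i| ^ 2 ≤ ∑ j, ‖y j‖ ^ 2 := by
    have := Finset.single_le_sum (f := fun j => ‖y j‖ ^ 2)
      (fun j _ => sq_nonneg _) (Finset.mem_univ i)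
    simpa [Real.norm_eq_abs, sq_abs] using this
  calc |y i| = Real.sqrt (|y i| ^ 2) := by rw [Real.sqrt_sq (abs_nonneg _)]
    _ ≤ Real.sqrt (∑ j, ‖y j‖ ^ 2) := Real.sqrt_le_sqrt h1

lemma norm_sub_flr (y : Euc m) : ‖y - flr y‖ ≤ Real.sqrt m := by
  have h := norm_le_of_coords (y := y - flr y) (t := 1) zero_le_one ?_
  · simpa using h
  · intro i
    have e : (y - flr y) i = y i - (⌊y i⌋ : ℝ) := rfl
    rw [e, abs_le]
    constructor
    · linarith [Int.floor_le (y i)]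
    · linarith [Int.lt_floor_add_one (y i)]

lemma flr_eq_flr_of_cube {v : Fin m → ℤ} {x y : Euc m}
    (hx : x ∈ latticeCube v 1) (hy : y ∈ latticeCube v 1) : flr x = flr y := by
  unfold flr
  congr 1
  funext i
  have h1 : ⌊x i⌋ = v i := Int.floor_eq_iff.2 ⟨(hx i).1, (hx i).2⟩
  have h2 : ⌊y i⌋ = v i := Int.floor_eq_iff.2 ⟨(hy i).1, (hy i).2⟩
  rw [h1, h2]

lemma rpow_finsum {ι : Type*} {R : ℝ} (hR : 0 < R) (s : Finset ι) (g : ι → ℝ) :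
    R ^ (∑ i ∈ s, g i) = ∏ i ∈ s, R ^ g i := by
  classical
  induction s using Finset.cons_induction with
  | empty => simp
  | cons i s hi ih =>
      rw [Finset.sum_cons, Finset.prod_cons, Real.rpow_add hR, ih]

end RBL
set_option maxHeartbeats 1000000 in
theorem regularized_BL_lower_bound_example
    (n J : ℕ) (p : Fin J → ℝ) (hp : ∀ j, p j ∈ Set.Icc (0:ℝ) 1)
    (nd : Fin J → ℕ)
    (π : ∀ j, Euc n →ₗ[ℝ] Euc (nd j)) (hπ : ∀ j, Function.Surjective (π j)) :
    ∃ c : ℝ, 0 < c ∧ ∀ (V : Submodule ℝ (Euc n)) (R : ℝ), 1 ≤ R →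
      ∃ f : ∀ j, Euc (nd j) → ℝ,
        (∀ j, LatticeConst (f j)) ∧ (∀ j, Integrable (f j)) ∧
        (∀ j x, 0 ≤ f j x) ∧ (∀ j, f j ≠ 0) ∧
        c * R ^ ((finrank ℝ V : ℝ) - ∑ j, p j * (finrank ℝ (V.map (π j)) : ℝ)) *
            ∏ j, (∫ x, f j x) ^ p j ≤
          ∫ x in cubeR n R, ∏ j, f j (π j x) ^ p j := by
  classical
  obtain ⟨hp0, hp1⟩ : (∀ j, 0 ≤ p j) ∧ (∀ j, p j ≤ 1) :=
    ⟨fun j => (hp j).1, fun j => (hp j).2⟩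
  -- constants depending only on π, p, n
  set α : ℝ := (volume (Metric.closedBall (0 : Euc n) 1)).toReal with hαdef
  have hα_pos : 0 < α := by
    rw [hαdef]
    refine ENNReal.toReal_pos (Metric.measure_closedBall_pos volume _ one_pos).ne' ?_
    exact measure_closedBall_lt_top.ne
  set N : Fin J → ℝ := fun j => ‖LinearMap.toContinuousLinearMap (π j)‖ with hNdef
  have hN0 : ∀ j, 0 ≤ N j := fun j => norm_nonneg _
  set sq : Fin J → ℝ := fun j => Real.sqrt (nd j) with hsqdef
  have hsq0 : ∀ j, 0 ≤ sq j := fun j => Real.sqrt_nonneg _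
  set K : Fin J → ℝ := fun j => sq j + N j + 1 with hKdef
  have hK0 : ∀ j, 0 < K j := fun j => by
    have := hN0 j; have := hsq0 j; simp only [hKdef]; linarith
  set M : Fin J → ℝ := fun j => N j + sq j + 1 with hMdef
  have hM0 : ∀ j, 0 < M j := fun j => by
    have := hN0 j; have := hsq0 j; simp only [hMdef]; linarith
  set C : Fin J → ℝ := fun j =>
    (max 1 (M j + sq j)) ^ (nd j) * (max 1 (K j + sq j)) ^ (nd j) *
      ((volume (Metric.closedBall (0 : Euc (nd j)) 2)).toReal + 1) with hCdef
  have hC0 : ∀ j, 0 < C j := fun j => by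
    simp only [hCdef]
    have h1 : (0:ℝ) < max 1 (M j + sq j) := lt_of_lt_of_le one_pos (le_max_left _ _)
    have h2 : (0:ℝ) < max 1 (K j + sq j) := lt_of_lt_of_le one_pos (le_max_left _ _)
    have h3 : (0:ℝ) ≤ (volume (Metric.closedBall (0 : Euc (nd j)) 2)).toReal :=
      ENNReal.toReal_nonneg
    positivity
  have hCprod_pos : 0 < ∏ j, C j ^ p j :=
    Finset.prod_pos fun j _ => Real.rpow_pos_of_pos (hC0 j) _
  refine ⟨(α * (1/2)^n) / ∏ j, C j ^ p j, ?_, ?_⟩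
  · apply div_pos _ hCprod_pos
    positivity
  intro V R hR
  have hR0 : (0:ℝ) < R := lt_of_lt_of_le one_pos hR
  set W : ∀ j, Submodule ℝ (Euc (nd j)) := fun j => V.map (π j) with hWdef
  set dW : Fin J → ℕ := fun j => finrank ℝ (W j) with hdWdef
  set dV : ℕ := finrank ℝ V with hdVdef
  have hdV_le : dV ≤ n := by
    have := Submodule.finrank_le V
    rwa [finrank_euclideanSpace_fin] at this
  have hdW_le : ∀ j, dW j ≤ nd j := fun j => by
    have := Submodule.finrank_le (W j)
    rwa [finrank_euclideanSpace_fin] at this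
  set S : ∀ j, Set (Euc (nd j)) := fun j =>
    {y | ‖RBL.flr y - oproj (W j) (RBL.flr y)‖ ≤ K j ∧ ‖RBL.flr y‖ ≤ M j * R} with hSdef
  have hπcont : ∀ j, Continuous (π j) := fun j => (π j).continuous_of_finiteDimensional
  have hπnorm : ∀ j z, ‖π j z‖ ≤ N j * ‖z‖ := fun j z => by
    have := (LinearMap.toContinuousLinearMap (π j)).le_opNorm z
    simpa [LinearMap.coe_toContinuousLinearMap'] using this
  -- measurability of S j
  have hSmeas : ∀ j, MeasurableSet (S j) := by
    intro j
    have hT : IsClosed {z : Euc (nd j) | ‖z - oproj (W j) z‖ ≤ K j ∧ ‖z‖ ≤ M j * R} := by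
      rw [Set.setOf_and]
      exact IsClosed.inter
        (isClosed_le ((continuous_id.sub (oprojL (W j)).continuous).norm) continuous_const)
        (isClosed_le continuous_norm continuous_const)
    have : S j = RBL.flr ⁻¹' {z : Euc (nd j) | ‖z - oproj (W j) z‖ ≤ K j ∧ ‖z‖ ≤ M j * R} :=
      rfl
    rw [this]
    exact RBL.measurable_flr hT.measurableSet
  -- tube containment and volume bound
  have hSsub : ∀ j, S j ⊆
      {y : Euc (nd j) | ‖y - oproj (W j) y‖ ≤ K j + sq j ∧ ‖y‖ ≤ (M j + sq j) * R} := by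
    intro j y hy
    obtain ⟨h1, h2⟩ := hy
    have hflr := RBL.norm_sub_flr y
    constructor
    · have e : y - oproj (W j) y =
          (RBL.flr y - oproj (W j) (RBL.flr y)) + ((y - RBL.flr y) - oproj (W j) (y - RBL.flr y)) := by
        rw [map_sub]; abel
      calc ‖y - oproj (W j) y‖
          ≤ ‖RBL.flr y - oproj (W j) (RBL.flr y)‖ +
            ‖(y - RBL.flr y) - oproj (W j) (y - RBL.flr y)‖ := by
              rw [e]; exact norm_add_le _ _
        _ ≤ K j + sq j := by
              refine add_le_add h1 (le_trans (RBL.norm_sub_oproj_le _ _) ?_)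
              simpa [hsqdef] using hflr
    · have : ‖y‖ ≤ ‖RBL.flr y‖ + ‖y - RBL.flr y‖ := by
        calc ‖y‖ = ‖RBL.flr y + (y - RBL.flr y)‖ := by congr 1; abel
          _ ≤ _ := norm_add_le _ _
      have hsqR : sq j * 1 ≤ sq j * R := mul_le_mul_of_nonneg_left hR (hsq0 j)
      have hflr' : ‖y - RBL.flr y‖ ≤ sq j := by simpa [hsqdef] using hflr
      have : ‖y‖ ≤ M j * R + sq j := by linarith
      calc ‖y‖ ≤ M j * R + sq j := this
        _ ≤ (M j + sq j) * R := by ring_nf; nlinarith [hsq0 j]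
  have hSvol : ∀ j, volume (S j) ≤
      ENNReal.ofReal (((M j + sq j) * R) ^ (dW j) * (K j + sq j) ^ (nd j - dW j)) *
        volume (Metric.closedBall (0 : Euc (nd j)) 2) := by
    intro j
    have ha : 0 < (M j + sq j) * R := mul_pos (by have := hM0 j; have := hsq0 j; linarith) hR0
    have hb : 0 < K j + sq j := by have := hK0 j; have := hsq0 j; linarith
    exact le_trans (measure_mono (hSsub j)) (RBL.tube_vol_le (W j) ha hb)
  have hSfin : ∀ j, volume (S j) < ⊤ := by
    intro j
    refine lt_of_le_of_lt (hSvol j) ?_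
    exact ENNReal.mul_lt_top ENNReal.ofReal_lt_top measure_closedBall_lt_top
  -- the functions
  refine ⟨fun j => (S j).indicator 1, ?_, ?_, ?_, ?_, ?_⟩
  · -- LatticeConst
    intro j v x hx y hy
    have hf : RBL.flr x = RBL.flr y := RBL.flr_eq_flr_of_cube hx hy
    show (S j).indicator 1 x = (S j).indicator 1 y
    simp only [hSdef, Set.indicator_apply, Set.mem_setOf_eq, Pi.one_apply, hf]
  · -- Integrable
    intro j
    show Integrable ((S j).indicator (1 : Euc (nd j) → ℝ))
    rw [integrable_indicator_iff (hSmeas j)]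
    exact integrableOn_const (hSfin j).ne
  · -- nonneg
    intro j x
    show 0 ≤ (S j).indicator 1 x
    exact Set.indicator_apply_nonneg fun _ => zero_le_one
  · -- nonzero
    intro j h0'
    have h0 : (S j).indicator (1 : Euc (nd j) → ℝ) = 0 := h0'
    have hmem : (0 : Euc (nd j)) ∈ S j := by
      constructor
      · rw [RBL.flr_zero, map_zero, sub_zero, norm_zero]
        exact (hK0 j).le
      · rw [RBL.flr_zero, norm_zero]
        exact (mul_pos (hM0 j) hR0).le
    have h1 : (S j).indicator (1 : Euc (nd j) → ℝ) 0 = 1 := Set.indicator_of_mem hmem _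
    rw [h0] at h1
    simp at h1
  -- the main inequality
  have hint_eq : ∀ j, (∫ x, (S j).indicator (1 : Euc (nd j) → ℝ) x) =
      (volume (S j)).toReal := fun j => integral_indicator_one (hSmeas j)
  have hint_nonneg : ∀ j, 0 ≤ ∫ x, (S j).indicator (1 : Euc (nd j) → ℝ) x := by
    intro j; rw [hint_eq j]; exact ENNReal.toReal_nonneg
  have hint_le : ∀ j, (∫ x, (S j).indicator (1 : Euc (nd j) → ℝ) x) ≤ C j * R ^ (dW j) := by
    intro j
    rw [hint_eq j]
    have hA0 : 0 ≤ ((M j + sq j) * R) ^ (dW j) * (K j + sq j) ^ (nd j - dW j) := by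
      have := hM0 j; have := hsq0 j; have := hK0 j; positivity
    have h := ENNReal.toReal_mono
      (ENNReal.mul_lt_top ENNReal.ofReal_lt_top measure_closedBall_lt_top).ne (hSvol j)
    rw [ENNReal.toReal_mul, ENNReal.toReal_ofReal hA0] at h
    refine le_trans h ?_
    set t : ℝ := (volume (Metric.closedBall (0 : Euc (nd j)) 2)).toReal with htdef
    have ht0 : 0 ≤ t := ENNReal.toReal_nonneg
    have h1 : (M j + sq j) ^ (dW j) ≤ (max 1 (M j + sq j)) ^ (nd j) := by
      refine le_trans (pow_le_pow_left₀ (by have := hM0 j; have := hsq0 j; linarith)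
        (le_max_right 1 _) _) ?_
      exact pow_le_pow_right₀ (le_max_left 1 _) (hdW_le j)
    have h2 : (K j + sq j) ^ (nd j - dW j) ≤ (max 1 (K j + sq j)) ^ (nd j) := by
      refine le_trans (pow_le_pow_left₀ (by have := hK0 j; have := hsq0 j; linarith)
        (le_max_right 1 _) _) ?_
      exact pow_le_pow_right₀ (le_max_left 1 _) (Nat.sub_le _ _)
    have e1 : ((M j + sq j) * R) ^ (dW j) * (K j + sq j) ^ (nd j - dW j) * t =
        ((M j + sq j) ^ (dW j) * (K j + sq j) ^ (nd j - dW j) * t) * R ^ (dW j) := by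
      rw [mul_pow]; ring
    rw [e1, hCdef]
    refine mul_le_mul_of_nonneg_right ?_ (pow_nonneg hR0.le _)
    have hKsq0 : (0:ℝ) ≤ (K j + sq j) ^ (nd j - dW j) := by
      have := hK0 j; have := hsq0 j; positivity
    have hmax1 : (0:ℝ) ≤ (max 1 (M j + sq j)) ^ (nd j) := by positivity
    have hmax2 : (0:ℝ) ≤ (max 1 (K j + sq j)) ^ (nd j) := by positivity
    calc (M j + sq j) ^ (dW j) * (K j + sq j) ^ (nd j - dW j) * t
        ≤ ((max 1 (M j + sq j)) ^ (nd j) * (max 1 (K j + sq j)) ^ (nd j)) * (t + 1) := by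
          refine mul_le_mul (mul_le_mul h1 h2 hKsq0 hmax1) (by linarith) ht0 ?_
          exact mul_nonneg hmax1 hmax2
      _ = (max 1 (M j + sq j)) ^ (nd j) * (max 1 (K j + sq j)) ^ (nd j) * (t + 1) := by ring
  -- the good set B
  set B : Set (Euc n) := {x | ‖x - oproj V x‖ ≤ 1/2 ∧ ‖oproj V x‖ ≤ R/2} with hBdef
  have hBmeas : MeasurableSet B := by
    rw [hBdef, Set.setOf_and]
    exact (IsClosed.inter
      (isClosed_le ((continuous_id.sub (oprojL V).continuous).norm) continuous_const)
      (isClosed_le ((oprojL V).continuous.norm) continuous_const)).measurableSet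
  have hBnorm : ∀ x ∈ B, ‖x‖ ≤ R := by
    rintro x ⟨h1, h2⟩
    have : ‖x‖ ≤ ‖oproj V x‖ + ‖x - oproj V x‖ := by
      calc ‖x‖ = ‖oproj V x + (x - oproj V x)‖ := by congr 1; abel
        _ ≤ _ := norm_add_le _ _
    linarith
  have hBcube : B ⊆ cubeR n R := by
    intro x hx i
    exact le_trans (RBL.abs_coord_le_norm x i) (hBnorm x hx)
  have hBS : ∀ j, ∀ x ∈ B, π j x ∈ S j := by
    rintro j x ⟨hx1, hx2⟩
    have hxR : ‖x‖ ≤ R := hBnorm x ⟨hx1, hx2⟩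
    have hflr := RBL.norm_sub_flr (π j x)
    have hflr' : ‖π j x - RBL.flr (π j x)‖ ≤ sq j := by simpa [hsqdef] using hflr
    have hπP : π j (oproj V x) ∈ W j := Submodule.mem_map_of_mem (RBL.oproj_mem V x)
    constructor
    · have e : RBL.flr (π j x) - oproj (W j) (RBL.flr (π j x)) =
          (RBL.flr (π j x) - π j (oproj V x)) -
            oproj (W j) (RBL.flr (π j x) - π j (oproj V x)) := by
        rw [map_sub, RBL.oproj_of_mem _ hπP]; abel
      rw [e]
      refine le_trans (RBL.norm_sub_oproj_le _ _) ?_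
      have h5 : ‖RBL.flr (π j x) - π j (oproj V x)‖ ≤
          ‖RBL.flr (π j x) - π j x‖ + ‖π j x - π j (oproj V x)‖ := by
        calc ‖RBL.flr (π j x) - π j (oproj V x)‖
            = ‖(RBL.flr (π j x) - π j x) + (π j x - π j (oproj V x))‖ := by
              congr 1; abel
          _ ≤ _ := norm_add_le _ _
      have h6 : ‖RBL.flr (π j x) - π j x‖ ≤ sq j := by
        rw [norm_sub_rev]; exact hflr'
      have h7 : ‖π j x - π j (oproj V x)‖ ≤ N j * (1/2) := by
        rw [← map_sub]
        exact le_trans (hπnorm j _) (mul_le_mul_of_nonneg_left hx1 (hN0 j))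
      have hKj : K j = sq j + N j + 1 := by rw [hKdef]
      have := hN0 j
      linarith
    · have h8 : ‖RBL.flr (π j x)‖ ≤ ‖π j x‖ + ‖RBL.flr (π j x) - π j x‖ := by
        calc ‖RBL.flr (π j x)‖ = ‖π j x + (RBL.flr (π j x) - π j x)‖ := by
              congr 1; abel
          _ ≤ _ := norm_add_le _ _
      have h9 : ‖π j x‖ ≤ N j * R :=
        le_trans (hπnorm j x) (mul_le_mul_of_nonneg_left hxR (hN0 j))
      have h10 : ‖RBL.flr (π j x) - π j x‖ ≤ sq j := by rw [norm_sub_rev]; exact hflr'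
      have hsqR : sq j * 1 ≤ sq j * R := mul_le_mul_of_nonneg_left hR (hsq0 j)
      have hMj : M j = N j + sq j + 1 := by rw [hMdef]
      nlinarith [hsq0 j, hN0 j]
  -- measurability / integrability of the integrand
  set G : Euc n → ℝ := fun x => ∏ j, (S j).indicator (1 : Euc (nd j) → ℝ) (π j x) ^ p j
    with hGdef
  have hf01 : ∀ j z, 0 ≤ (S j).indicator (1 : Euc (nd j) → ℝ) z ∧
      (S j).indicator (1 : Euc (nd j) → ℝ) z ≤ 1 := by
    intro j z
    by_cases h : z ∈ S j
    · simp [Set.indicator_of_mem h]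
    · simp [Set.indicator_of_notMem h]
  have hG0 : ∀ x, 0 ≤ G x := by
    intro x
    exact Finset.prod_nonneg fun j _ => Real.rpow_nonneg (hf01 j _).1 _
  have hG1 : ∀ x, G x ≤ 1 := by
    intro x
    refine Finset.prod_le_one (fun j _ => Real.rpow_nonneg (hf01 j _).1 _) ?_
    intro j _
    exact Real.rpow_le_one (hf01 j _).1 (hf01 j _).2 (hp0 j)
  have hGmeas : Measurable G := by
    rw [hGdef]
    refine Finset.measurable_prod _ ?_
    intro j _
    have hpre : MeasurableSet ((π j) ⁻¹' (S j)) :=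
      (hSmeas j).preimage (hπcont j).measurable
    have e : (fun x => (S j).indicator (1 : Euc (nd j) → ℝ) (π j x) ^ p j) =
        ((π j) ⁻¹' (S j)).piecewise (fun _ => (1:ℝ) ^ p j) (fun _ => (0:ℝ) ^ p j) := by
      funext x
      by_cases h : π j x ∈ S j
      · simp [Set.piecewise, Set.indicator_of_mem h, h]
      · simp [Set.piecewise, Set.indicator_of_notMem h, h]
    rw [e]
    exact Measurable.piecewise hpre measurable_const measurable_const
  have hcubemeas : MeasurableSet (cubeR n R) := by
    have e : cubeR n R = ⋂ i, {x : Euc n | |x i| ≤ R} := by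
      ext x
      exact ⟨fun h => Set.mem_iInter.2 h, fun h i => Set.mem_iInter.1 h i⟩
    rw [e]
    refine MeasurableSet.iInter fun i => ?_
    exact (isClosed_le ((RBL.continuous_coord i).abs) continuous_const).measurableSet
  have hcubevol : volume (cubeR n R) < ⊤ := by
    have hsub : cubeR n R ⊆ Metric.closedBall (0 : Euc n) (Real.sqrt n * R) := by
      intro x hx
      rw [Metric.mem_closedBall, dist_zero_right]
      exact RBL.norm_le_of_coords hR0.le hx
    exact lt_of_le_of_lt (measure_mono hsub) measure_closedBall_lt_top
  have hBfin : volume B < ⊤ := lt_of_le_of_lt (measure_mono hBcube) hcubevol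
  have hGint : IntegrableOn G (cubeR n R) := by
    refine Measure.integrableOn_of_bounded (M := 1) hcubevol.ne
      hGmeas.aestronglyMeasurable ?_
    refine Filter.Eventually.of_forall fun x => ?_
    rw [Real.norm_eq_abs, abs_of_nonneg (hG0 x)]
    exact hG1 x
  -- lower bound for the integral
  have hBint : ∫ x in B, G x = (volume B).toReal := by
    have e : ∀ x ∈ B, G x = 1 := by
      intro x hx
      rw [hGdef]
      refine Finset.prod_eq_one fun j _ => ?_
      rw [Set.indicator_of_mem (hBS j x hx)]
      simp [Real.one_rpow]
    rw [setIntegral_congr_fun hBmeas e, setIntegral_const]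
    simp [Measure.real]
  have hmono : ∫ x in B, G x ≤ ∫ x in cubeR n R, G x := by
    refine setIntegral_mono_set hGint ?_ (HasSubset.Subset.eventuallyLE hBcube)
    exact Filter.Eventually.of_forall fun x => hG0 x
  have hBvol : ENNReal.ofReal ((R/2) ^ dV * (1/2) ^ (n - dV)) *
      volume (Metric.closedBall (0 : Euc n) 1) ≤ volume B := by
    have := RBL.slab_vol_ge V (a := R/2) (b := (1:ℝ)/2) (by linarith) (by norm_num)
    exact this
  have hBlow : (R/2) ^ dV * (1/2) ^ (n - dV) * α ≤ (volume B).toReal := by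
    have h := ENNReal.toReal_mono hBfin.ne hBvol
    rw [ENNReal.toReal_mul, ENNReal.toReal_ofReal (by positivity)] at h
    exact h
  -- putting it together
  have hprod_le : (∏ j, (∫ x, (S j).indicator (1 : Euc (nd j) → ℝ) x) ^ p j) ≤
      ∏ j, (C j * R ^ (dW j)) ^ p j := by
    refine Finset.prod_le_prod (fun j _ => Real.rpow_nonneg (hint_nonneg j) _) ?_
    intro j _
    exact Real.rpow_le_rpow (hint_nonneg j) (hint_le j) (hp0 j)
  set σ : ℝ := ∑ j, p j * (dW j : ℝ) with hσdef
  have hprod_eq : (∏ j, (C j * R ^ (dW j)) ^ p j) =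
      (∏ j, C j ^ p j) * R ^ σ := by
    rw [hσdef]
    rw [RBL.rpow_finsum hR0]
    rw [← Finset.prod_mul_distrib]
    refine Finset.prod_congr rfl fun j _ => ?_
    rw [Real.mul_rpow (hC0 j).le (pow_nonneg hR0.le _)]
    congr 1
    rw [← Real.rpow_natCast R (dW j), ← Real.rpow_mul hR0.le]
    ring_nf
  have hexp : R ^ ((dV : ℝ) - σ) * R ^ σ = R ^ (dV : ℕ) := by
    rw [← Real.rpow_add hR0, sub_add_cancel, Real.rpow_natCast]
  have hfinal : (α * (1/2)^n / ∏ j, C j ^ p j) * R ^ ((dV : ℝ) - σ) *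
      ((∏ j, C j ^ p j) * R ^ σ) = (R/2) ^ dV * (1/2) ^ (n - dV) * α := by
    have e1 : (α * (1/2)^n / ∏ j, C j ^ p j) * R ^ ((dV : ℝ) - σ) *
        ((∏ j, C j ^ p j) * R ^ σ) =
        α * (1/2)^n * (R ^ ((dV : ℝ) - σ) * R ^ σ) := by
      field_simp
    rw [e1, hexp]
    have e2 : ((1:ℝ)/2)^n = (1/2) ^ dV * (1/2) ^ (n - dV) := by
      rw [← pow_add, Nat.add_sub_cancel' hdV_le]
    rw [e2]
    have e3 : (R/2 : ℝ) ^ dV = R ^ dV * (1/2) ^ dV := by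
      rw [div_pow, one_div, div_eq_mul_inv, inv_pow]
    rw [e3]
    ring
  -- final chain
  have hcR0 : 0 ≤ (α * (1/2)^n / ∏ j, C j ^ p j) * R ^ ((dV : ℝ) - σ) := by
    have h1 : (0:ℝ) < α * (1/2)^n / ∏ j, C j ^ p j := by
      apply div_pos _ hCprod_pos
      positivity
    exact mul_nonneg h1.le (Real.rpow_nonneg hR0.le _)
  show (α * (1/2)^n / ∏ j, C j ^ p j) * R ^ ((dV : ℝ) - σ) *
      ∏ j, (∫ x, (S j).indicator (1 : Euc (nd j) → ℝ) x) ^ p j ≤ ∫ x in cubeR n R, G x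
  calc (α * (1/2)^n / ∏ j, C j ^ p j) * R ^ ((dV : ℝ) - σ) *
        ∏ j, (∫ x, (S j).indicator (1 : Euc (nd j) → ℝ) x) ^ p j
      ≤ (α * (1/2)^n / ∏ j, C j ^ p j) * R ^ ((dV : ℝ) - σ) *
        ∏ j, (C j * R ^ (dW j)) ^ p j := mul_le_mul_of_nonneg_left hprod_le hcR0
    _ = (R/2) ^ dV * (1/2) ^ (n - dV) * α := by rw [hprod_eq]; exact hfinal
    _ ≤ (volume B).toReal := hBlow
    _ = ∫ x in B, G x := hBint.symm
    _ ≤ ∫ x in cubeR n R, G x := hmono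
end
end

section
/- Let π_j : ℝ^n → ℝ^{n_j} (j = 1,…,J) be surjective linear maps and p ∈ [0,1]^J. Suppose W ≤ ℝ^n is a subspace attaining the supremum: dim W − Σ_{i=1}^J p_i dim π_i(W) ≥ dim U − Σ_{i=1}^J p_i dim π_i(U) for every subspace U ≤ ℝ^n. For each i define L_i : W^⊥ → π_i(W)^⊥ by L_i = P_{π_i(W)^⊥} ∘ (π_i restricted to W^⊥), where π_i(W)^⊥ is the orthogonal complement of π_i(W) in ℝ^{n_i}. Then dim V ≤ Σ_{i=1}^J p_i dim L_i(V) for every subspace V ≤ W^⊥. -/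
open MeasureTheory Module
noncomputable section

set_option linter.unnecessarySimpa false in
lemma sup_orth_eq {m : ℕ} (A B : Submodule ℝ (Euc m)) :
    A ⊔ B = A ⊔ B.map (oproj Aᗮ) := by
  apply le_antisymm
  · refine sup_le le_sup_left ?_
    intro b hb
    have := A.starProjection_add_starProjection_orthogonal b
    have h1 : (A.orthogonalProjection b : Euc m) ∈ A := (A.orthogonalProjection b).2
    have h2 : (oproj Aᗮ) b ∈ B.map (oproj Aᗮ) := Submodule.mem_map_of_mem hb
    have : b = (A.orthogonalProjection b : Euc m) + (oproj Aᗮ) b := by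
      simpa [oproj, oprojL] using this.symm
    rw [this]
    exact Submodule.add_mem _ (Submodule.mem_sup_left h1) (Submodule.mem_sup_right h2)
  · refine sup_le le_sup_left ?_
    rintro _ ⟨b, hb, rfl⟩
    have := A.starProjection_add_starProjection_orthogonal b
    have : (oproj Aᗮ) b = b - (A.orthogonalProjection b : Euc m) := by
      simpa [oproj, oprojL, eq_sub_iff_add_eq, add_comm] using this
    rw [this]
    exact Submodule.sub_mem _ (Submodule.mem_sup_right hb)
      (Submodule.mem_sup_left (A.orthogonalProjection b).2)

lemma finrank_sup_orth {m : ℕ} (A B : Submodule ℝ (Euc m)) :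
    finrank ℝ ↥(A ⊔ B) = finrank ℝ A + finrank ℝ (B.map (oproj Aᗮ)) := by
  have hle : B.map (oproj Aᗮ) ≤ Aᗮ := by
    rintro _ ⟨b, hb, rfl⟩
    exact (Aᗮ.orthogonalProjection b).2
  have hdisj : A ⊓ B.map (oproj Aᗮ) = ⊥ := by
    rw [eq_bot_iff]
    exact le_trans (inf_le_inf_left A hle) (by simp [Submodule.inf_orthogonal_eq_bot])
  have := Submodule.finrank_sup_add_finrank_inf_eq A (B.map (oproj Aᗮ))
  rw [hdisj] at this; simp only [finrank_bot] at this
  rw [sup_orth_eq]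
  omega

theorem critical_subspace_quotient_condition
    (n J : ℕ) (nd : Fin J → ℕ) (p : Fin J → ℝ) (hp : ∀ j, p j ∈ Set.Icc (0:ℝ) 1)
    (π : ∀ j, Euc n →ₗ[ℝ] Euc (nd j)) (hπ : ∀ j, Function.Surjective (π j))
    (W : Submodule ℝ (Euc n))
    (hW : ∀ U : Submodule ℝ (Euc n),
      (finrank ℝ ↥U : ℝ) - ∑ i, p i * (finrank ℝ ↥(U.map (π i)) : ℝ) ≤
        (finrank ℝ ↥W : ℝ) - ∑ i, p i * (finrank ℝ ↥(W.map (π i)) : ℝ)) :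
    ∀ V : Submodule ℝ (Euc n), V ≤ Wᗮ →
      (finrank ℝ ↥V : ℝ) ≤
        ∑ i, p i * (finrank ℝ ↥(V.map ((oproj ((W.map (π i))ᗮ)) ∘ₗ (π i))) : ℝ) := by
  intro V hV
  have key := hW (W ⊔ V)
  have hdisj : W ⊓ V = ⊥ := by
    rw [eq_bot_iff]
    exact le_trans (inf_le_inf_left W hV) (by simp [Submodule.inf_orthogonal_eq_bot])
  have hd : finrank ℝ ↥(W ⊔ V) = finrank ℝ W + finrank ℝ V := by
    have := Submodule.finrank_sup_add_finrank_inf_eq W V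
    rw [hdisj] at this; simp only [finrank_bot] at this; omega
  have hdim : ∀ i, finrank ℝ ↥((W ⊔ V).map (π i)) =
      finrank ℝ ↥(W.map (π i)) +
        finrank ℝ ↥(V.map ((oproj ((W.map (π i))ᗮ)) ∘ₗ (π i))) := by
    intro i
    rw [Submodule.map_sup, finrank_sup_orth, Submodule.map_comp]
  have hsum : ∑ i, p i * (finrank ℝ ↥((W ⊔ V).map (π i)) : ℝ) =
      ∑ i, p i * (finrank ℝ ↥(W.map (π i)) : ℝ) +
        ∑ i, p i * (finrank ℝ ↥(V.map ((oproj ((W.map (π i))ᗮ)) ∘ₗ (π i))) : ℝ) := by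
    rw [← Finset.sum_add_distrib]
    refine Finset.sum_congr rfl fun i _ => ?_
    rw [hdim i]; push_cast; ring
  rw [hd, hsum] at key
  push_cast at key ⊢
  linarith
end
end
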